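/- Let V, H be finite-dimensional real inner product spaces with dim V = 3, J : V → End(H) satisfying the H-type condition, and z₁, z₂, z₃ an orthonormal basis of V. If J_{z₁}J_{z₂}J_{z₃} = ±Id_H, then the set {a·Id_H + J_z : a ∈ ℝ, z ∈ V} is a subalgebra of End(H) isomorphic as an ℝ-algebra to the quaternions ℍ. -/

import Mathlib

open scoped RealInnerProductSpace

/-!
The Clifford relation makes `i = J z₀` and `j = J z₁` anticommuting square roots of `-1`, so
`(i, j, ij)` is a quaternion basis of `End H`; the induced algebra map `ℍ → End H` is injective
because `ℍ` is a division ring. Since `(ij)² = -1`, the hypothesis `ij · J z₂ = ±1` forces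
`J z₂ = ∓ij`, so the image `ℝ·1 + span {i, j, ij}` is exactly `ℝ·1 + J(V)`.
-/

section CliffordRelation

variable {V A : Type*} [NormedAddCommGroup V] [InnerProductSpace ℝ V] [Ring A] [Algebra ℝ A]
  {J : V →ₗ[ℝ] A}

theorem clifford_mul_self_eq_neg_one
    (hanti : ∀ z w : V, J z * J w + J w * J z = algebraMap ℝ A (-2 * ⟪z, w⟫))
    {z : V} (hz : ‖z‖ = 1) : J z * J z = -1 := by
  have h := hanti z z
  rw [real_inner_self_eq_norm_sq, hz, ← two_smul ℝ, Algebra.algebraMap_eq_smul_one] at h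
  have h2 : (2 : ℝ) • (J z * J z) = (2 : ℝ) • (-1 : A) := by rw [h]; module
  exact smul_right_injective A two_ne_zero h2

theorem clifford_anticomm
    (hanti : ∀ z w : V, J z * J w + J w * J z = algebraMap ℝ A (-2 * ⟪z, w⟫))
    {z w : V} (h : ⟪z, w⟫ = 0) : J w * J z = -(J z * J w) := by
  apply eq_neg_of_add_eq_zero_right
  rw [hanti, h, mul_zero, map_zero]

end CliffordRelation

theorem eq_neg_mul_of_mul_self_eq_neg_one {R : Type*} [Ring R] {k x c : R} (hk : k * k = -1)
    (h : k * x = c) : x = -(k * c) := by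
  rw [← h, ← mul_assoc, hk, neg_one_mul, neg_neg]

theorem LinearMap.range_eq_span_of_span_eq_top {R M N ι : Type*} [Semiring R] [AddCommMonoid M]
    [Module R M] [AddCommMonoid N] [Module R N] (f : M →ₗ[R] N) {v : ι → M}
    (hv : Submodule.span R (Set.range v) = ⊤) :
    LinearMap.range f = Submodule.span R (Set.range (f ∘ v)) := by
  rw [LinearMap.range_eq_map, ← hv, Submodule.map_span, Set.range_comp]

theorem range_fin_three {α : Type*} (f : Fin 3 → α) : Set.range f = {f 0, f 1, f 2} := by
  simp [Fin.range_fin_succ, Fin.tail]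

namespace QuaternionAlgebra.Basis

variable {R A : Type*} [CommRing R] [Ring A] [Algebra R A]

theorem mem_range_liftHom_iff {c₁ c₂ c₃ : R} (q : Basis A c₁ c₂ c₃) {f : A} :
    f ∈ q.liftHom.range ↔ ∃ a : R, ∃ y ∈ Submodule.span R {q.i, q.j, q.k}, f = a • 1 + y := by
  simp only [Submodule.mem_span_insert, Submodule.mem_span_singleton, AlgHom.mem_range,
    liftHom_apply, lift, Algebra.algebraMap_eq_smul_one]
  constructor
  · rintro ⟨x, rfl⟩
    exact ⟨x.re, _, ⟨x.imI, _, ⟨x.imJ, _, ⟨x.imK, rfl⟩, rfl⟩, rfl⟩, by abel⟩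
  · rintro ⟨a, _, ⟨b, _, ⟨c, _, ⟨d, rfl⟩, rfl⟩, rfl⟩, rfl⟩
    exact ⟨⟨a, b, c, d⟩, by simp only; abel⟩

def ofAnticomm {i j : A} (hi : i * i = -1) (hj : j * j = -1) (hji : j * i = -(i * j)) :
    Basis A (-1 : R) 0 (-1) where
  i := i
  j := j
  k := i * j
  i_mul_i := by rw [hi, zero_smul, add_zero, neg_one_smul]
  j_mul_j := by rw [hj, neg_one_smul]
  i_mul_j := rfl
  j_mul_i := by rw [hji, zero_smul, zero_sub]

theorem liftHom_injective {K : Type*} [Field K] [LinearOrder K] [IsStrictOrderedRing K]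
    [Algebra K A] [Nontrivial A] (q : Basis A (-1 : K) 0 (-1)) : Function.Injective q.liftHom :=
  RingHom.injective (R := Quaternion K) q.liftHom.toRingHom

end QuaternionAlgebra.Basis

theorem htype_quaternionic_subalgebra_general
    {V H : Type*} [NormedAddCommGroup V] [InnerProductSpace ℝ V]
    [NormedAddCommGroup H] [InnerProductSpace ℝ H] [Nontrivial H]
    (J : V →ₗ[ℝ] Module.End ℝ H)
    (hanti : ∀ z w : V, J z * J w + J w * J z = algebraMap ℝ (Module.End ℝ H) (-2 * ⟪z, w⟫))
    (z : Fin 3 → V) (hz : Orthonormal ℝ z)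
    (hspan : Submodule.span ℝ (Set.range z) = ⊤)
    (hσ : J (z 0) * J (z 1) * J (z 2) = 1 ∨ J (z 0) * J (z 1) * J (z 2) = -1) :
    ∃ A : Subalgebra ℝ (Module.End ℝ H),
      (A : Set (Module.End ℝ H)) = {f | ∃ (a : ℝ) (w : V), f = a • (1 : Module.End ℝ H) + J w} ∧
        Nonempty (A ≃ₐ[ℝ] Quaternion ℝ) := by
  have hJsq (n : Fin 3) : J (z n) * J (z n) = -1 := clifford_mul_self_eq_neg_one hanti (hz.1 n)
  let q : QuaternionAlgebra.Basis (Module.End ℝ H) (-1 : ℝ) 0 (-1) :=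
    .ofAnticomm (hJsq 0) (hJsq 1) (clifford_anticomm hanti (hz.2 (by decide)))
  have hk : q.k * q.k = -1 := by simp
  have hJ2 : J (z 2) = -q.k ∨ J (z 2) = q.k := by
    rcases hσ with h | h
    · left; simpa using eq_neg_mul_of_mul_self_eq_neg_one hk h
    · right; simpa using eq_neg_mul_of_mul_self_eq_neg_one hk h
  have hspanJ : Submodule.span ℝ {q.i, q.j, q.k} = LinearMap.range J := by
    rw [J.range_eq_span_of_span_eq_top hspan, range_fin_three]
    rcases hJ2 with h | h <;>
      simp only [Function.comp_apply, h, Submodule.span_insert, ← Set.neg_singleton,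
        Submodule.span_neg] <;> rfl
  refine ⟨q.liftHom.range, ?_, ⟨(AlgEquiv.ofInjective _ q.liftHom_injective).symm⟩⟩
  ext f
  rw [SetLike.mem_coe, q.mem_range_liftHom_iff, hspanJ]
  simp

/-- If `dim V = 3`, `z₁, z₂, z₃` is an orthonormal basis of `V` and
`J_{z₁}J_{z₂}J_{z₃} = ±Id`, then `{a·Id + J_z : a ∈ ℝ, z ∈ V}` is a subalgebra of
`End(H)` isomorphic to the quaternions `ℍ`. -/
theorem htype_quaternionic_subalgebra
    {V H : Type*} [NormedAddCommGroup V] [InnerProductSpace ℝ V] [FiniteDimensional ℝ V]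
    [NormedAddCommGroup H] [InnerProductSpace ℝ H] [FiniteDimensional ℝ H] [Nontrivial H]
    (hm : Module.finrank ℝ V = 3)
    (J : V →ₗ[ℝ] Module.End ℝ H)
    (hskew : ∀ (z : V) (x y : H), ⟪J z x, y⟫ = -⟪x, J z y⟫)
    (hanti : ∀ z w : V, J z * J w + J w * J z = algebraMap ℝ (Module.End ℝ H) (-2 * ⟪z, w⟫))
    (z : Fin 3 → V) (hz : Orthonormal ℝ z)
    (hspan : Submodule.span ℝ (Set.range z) = ⊤)
    (hσ : J (z 0) * J (z 1) * J (z 2) = 1 ∨ J (z 0) * J (z 1) * J (z 2) = -1) :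
    ∃ A : Subalgebra ℝ (Module.End ℝ H),
      (A : Set (Module.End ℝ H)) = {f | ∃ (a : ℝ) (w : V), f = a • (1 : Module.End ℝ H) + J w} ∧
        Nonempty (A ≃ₐ[ℝ] Quaternion ℝ) :=
  htype_quaternionic_subalgebra_general J hanti z hz hspan hσ
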